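/- arXiv:2110.03254 — 12 statements merged into one kernel-verified Lean document; each statement's English description precedes it below -/
import Mathlib

section
/- If X is a solution of the T-NARE DX + XᵀA − XᵀBX + C = 0 (with A,B,C,D real n×n matrices), then with M = [[C, D],[A, −B]], the identity (M + zMᵀ)·[I; X] = [−Xᵀ; I]·(A − BX + z(Dᵀ − BᵀX)) holds for all z; in particular M·[I; X] = [−Xᵀ; I](A − BX) and Mᵀ·[I; X] = [−Xᵀ; I](Dᵀ − BᵀX). -/
open Matrix

theorem tnare_palindromic_linearization (n : ℕ) (A B C D X : Matrix (Fin n) (Fin n) ℝ)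
    (hX : D * X + Xᵀ * A - Xᵀ * B * X + C = 0) :
    (∀ z : ℝ,
      (Matrix.fromBlocks C D A (-B) + z • (Matrix.fromBlocks C D A (-B))ᵀ) *
          Matrix.fromRows (1 : Matrix (Fin n) (Fin n) ℝ) X =
        Matrix.fromRows (-Xᵀ) (1 : Matrix (Fin n) (Fin n) ℝ) *
          (A - B * X + z • (Dᵀ - Bᵀ * X))) ∧
    Matrix.fromBlocks C D A (-B) * Matrix.fromRows (1 : Matrix (Fin n) (Fin n) ℝ) X =
      Matrix.fromRows (-Xᵀ) (1 : Matrix (Fin n) (Fin n) ℝ) * (A - B * X) ∧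
    (Matrix.fromBlocks C D A (-B))ᵀ * Matrix.fromRows (1 : Matrix (Fin n) (Fin n) ℝ) X =
      Matrix.fromRows (-Xᵀ) (1 : Matrix (Fin n) (Fin n) ℝ) * (Dᵀ - Bᵀ * X) := by
  have h1 : C + D * X = -Xᵀ * (A - B * X) := by
    have := hX
    rw [neg_mul, Matrix.mul_sub]
    linear_combination (norm := noncomm_ring) hX - Matrix.mul_assoc Xᵀ B X
  have hXT : Xᵀ * Dᵀ + Aᵀ * X - Xᵀ * Bᵀ * X + Cᵀ = 0 := by
    have := congrArg Matrix.transpose hX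
    simpa [Matrix.transpose_add, Matrix.transpose_sub, Matrix.transpose_mul,
      Matrix.mul_assoc] using this
  have h2 : Cᵀ + Aᵀ * X = -Xᵀ * (Dᵀ - Bᵀ * X) := by
    rw [neg_mul, Matrix.mul_sub]
    linear_combination (norm := noncomm_ring) hXT - Matrix.mul_assoc Xᵀ Bᵀ X
  have e1 : Matrix.fromBlocks C D A (-B) * Matrix.fromRows (1 : Matrix (Fin n) (Fin n) ℝ) X =
      Matrix.fromRows (-Xᵀ) (1 : Matrix (Fin n) (Fin n) ℝ) * (A - B * X) := by
    rw [Matrix.fromBlocks_mul_fromRows, Matrix.fromRows_mul]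
    simp only [Matrix.mul_one, Matrix.one_mul, Matrix.neg_mul]
    rw [h1, ← sub_eq_add_neg, Matrix.neg_mul]
  have e2 : (Matrix.fromBlocks C D A (-B))ᵀ * Matrix.fromRows (1 : Matrix (Fin n) (Fin n) ℝ) X =
      Matrix.fromRows (-Xᵀ) (1 : Matrix (Fin n) (Fin n) ℝ) * (Dᵀ - Bᵀ * X) := by
    rw [Matrix.fromBlocks_transpose, Matrix.fromBlocks_mul_fromRows, Matrix.fromRows_mul]
    simp only [Matrix.mul_one, Matrix.one_mul, Matrix.transpose_neg, Matrix.neg_mul]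
    rw [h2, ← sub_eq_add_neg, Matrix.neg_mul]
  refine ⟨fun z => ?_, e1, e2⟩
  rw [Matrix.add_mul, Matrix.smul_mul, e1, e2, Matrix.mul_add, Matrix.mul_smul]
end

section
/- If X is a solution of the T-NARE DX + XᵀA − XᵀBX + C = 0 such that A − BX is invertible, then X satisfies the discrete-time algebraic Riccati equation Cᵀ + AᵀX = (C + DX)(A − BX)^{-1}(Dᵀ − BᵀX). -/
open Matrix

theorem tnare_dare (n : ℕ) (A B C D X : Matrix (Fin n) (Fin n) ℝ)
    (hX : D * X + Xᵀ * A - Xᵀ * B * X + C = 0)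
    (hABX : IsUnit (A - B * X)) :
    Cᵀ + Aᵀ * X = (C + D * X) * (A - B * X)⁻¹ * (Dᵀ - Bᵀ * X) := by
  have h1 : C + D * X = (-Xᵀ) * (A - B * X) :=
    sub_eq_zero.mp (by rw [← hX]; noncomm_ring)
  have hXt : Xᵀ * Dᵀ + Aᵀ * X - Xᵀ * Bᵀ * X + Cᵀ = 0 := by
    have := congrArg Matrix.transpose hX
    simpa [Matrix.transpose_mul, Matrix.mul_assoc] using this
  have h2 : Cᵀ + Aᵀ * X = (-Xᵀ) * (Dᵀ - Bᵀ * X) :=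
    sub_eq_zero.mp (by rw [← hXt]; noncomm_ring)
  have hinv : (A - B * X) * (A - B * X)⁻¹ = 1 :=
    Matrix.mul_nonsing_inv _ ((Matrix.isUnit_iff_isUnit_det _).mp hABX)
  rw [h1, h2, Matrix.mul_assoc, Matrix.mul_assoc, ← Matrix.mul_assoc (A - B * X), hinv, Matrix.one_mul]
end

section
/- If X is a solution of the T-NARE DX + XᵀA − XᵀBX + C = 0 such that Dᵀ − BᵀX is invertible, then X satisfies C + DX = (Cᵀ + AᵀX)(Dᵀ − BᵀX)^{-1}(A − BX). -/
open Matrix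

theorem tnare_dare' (n : ℕ) (A B C D X : Matrix (Fin n) (Fin n) ℝ)
    (hX : D * X + Xᵀ * A - Xᵀ * B * X + C = 0)
    (hDBX : IsUnit (Dᵀ - Bᵀ * X)) :
    C + D * X = (Cᵀ + Aᵀ * X) * (Dᵀ - Bᵀ * X)⁻¹ * (A - B * X) := by
  have hdet : IsUnit (Dᵀ - Bᵀ * X).det :=
    (Matrix.isUnit_iff_isUnit_det _).mp hDBX
  have h0 : Xᵀ * Dᵀ + Aᵀ * X - Xᵀ * Bᵀ * X + Cᵀ = 0 := by
    have := congrArg Matrix.transpose hX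
    simpa [Matrix.transpose_add, Matrix.transpose_sub, Matrix.transpose_mul,
      mul_assoc] using this
  have h1 : Cᵀ + Aᵀ * X = -Xᵀ * (Dᵀ - Bᵀ * X) := by
    rw [neg_mul, mul_sub, neg_sub, ← mul_assoc, ← sub_eq_zero, ← h0]
    abel
  rw [h1, mul_assoc, mul_assoc, Matrix.mul_nonsing_inv_cancel_left _ _ hdet]
  have h2 : -Xᵀ * (A - B * X) = -(Xᵀ * A - Xᵀ * B * X) := by
    rw [neg_mul, mul_sub, mul_assoc]
  rw [h2]
  have h3 : Xᵀ * A - Xᵀ * B * X = -(C + D * X) := by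
    rw [← sub_eq_zero, ← hX]; abel
  rw [h3, neg_neg]
end

section
/- Let M = [[C, D],[A, −B]] be nonsingular. Then any solution X of the T-NARE DX + XᵀA − XᵀBX + C = 0 satisfies det(A − BX) ≠ 0 and det(Dᵀ − BᵀX) ≠ 0. -/
open Matrix

lemma tnare_aux (n : ℕ) (P Q R S E X : Matrix (Fin n) (Fin n) ℝ)
    (hM : IsUnit (Matrix.fromBlocks P Q R S))
    (h1 : P + Q * X = -Xᵀ * E) (h2 : R + S * X = E) : E.det ≠ 0 := by
  intro hdet
  obtain ⟨v, hv, hv0⟩ := Matrix.exists_mulVec_eq_zero_iff.mpr hdet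
  have hinj := Matrix.mulVec_injective_iff_isUnit.mpr hM
  have hw : (Matrix.fromBlocks P Q R S).mulVec (Sum.elim v (X.mulVec v)) = 0 := by
    rw [Matrix.fromBlocks_mulVec, Sum.elim_comp_inl, Sum.elim_comp_inr]
    have ht : P.mulVec v + Q.mulVec (X.mulVec v) = 0 := by
      rw [Matrix.mulVec_mulVec, ← Matrix.add_mulVec, h1, Matrix.neg_mul,
        Matrix.neg_mulVec, ← Matrix.mulVec_mulVec, hv0, Matrix.mulVec_zero, neg_zero]
    have hb : R.mulVec v + S.mulVec (X.mulVec v) = 0 := by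
      rw [Matrix.mulVec_mulVec, ← Matrix.add_mulVec, h2, hv0]
    rw [ht, hb]
    ext (i | i) <;> simp
  have : Sum.elim v (X.mulVec v) = (0 : Fin n ⊕ Fin n → ℝ) := by
    apply hinj
    rw [hw, Matrix.mulVec_zero]
  exact hv (funext fun i => congrFun this (Sum.inl i))

theorem tnare_nonsingular_blocks (n : ℕ) (A B C D X : Matrix (Fin n) (Fin n) ℝ)
    (hM : IsUnit (Matrix.fromBlocks C D A (-B)))
    (hX : D * X + Xᵀ * A - Xᵀ * B * X + C = 0) :
    (A - B * X).det ≠ 0 ∧ (Dᵀ - Bᵀ * X).det ≠ 0 := by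
  constructor
  · refine tnare_aux n C D A (-B) (A - B * X) X hM ?_ ?_
    · rw [Matrix.neg_mul, Matrix.mul_sub]
      have := hX
      linear_combination (norm := noncomm_ring) this
    · rw [Matrix.neg_mul]; noncomm_ring
  · have hMT : IsUnit (Matrix.fromBlocks Cᵀ Aᵀ Dᵀ (-B)ᵀ) := by
      rw [← Matrix.fromBlocks_transpose, Matrix.isUnit_iff_isUnit_det, Matrix.det_transpose,
        ← Matrix.isUnit_iff_isUnit_det]
      exact hM
    refine tnare_aux n Cᵀ Aᵀ Dᵀ (-B)ᵀ (Dᵀ - Bᵀ * X) X hMT ?_ ?_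
    · have h := congrArg Matrix.transpose hX
      simp only [Matrix.transpose_add, Matrix.transpose_sub, Matrix.transpose_mul,
        Matrix.transpose_transpose, Matrix.transpose_zero] at h
      rw [Matrix.neg_mul, Matrix.mul_sub]
      linear_combination (norm := noncomm_ring) h
    · rw [Matrix.transpose_neg, Matrix.neg_mul]; noncomm_ring
end

section
/- If Y solves the dual equation YᵀD + AY − B + YᵀCY = 0, then with M = [[C, D],[A, −B]] one has (M + zMᵀ)·[Y; I] = [I; −Yᵀ]·(D + CY + z(Aᵀ + CᵀY)) for all z; in particular M·[Y; I] = [I; −Yᵀ](D + CY) and Mᵀ·[Y; I] = [I; −Yᵀ](Aᵀ + CᵀY). -/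
open Matrix

theorem dual_tnare_palindromic_linearization (n : ℕ) (A B C D Y : Matrix (Fin n) (Fin n) ℝ)
    (hY : Yᵀ * D + A * Y - B + Yᵀ * C * Y = 0) :
    (∀ z : ℝ,
      (Matrix.fromBlocks C D A (-B) + z • (Matrix.fromBlocks C D A (-B))ᵀ) *
          Matrix.fromRows Y (1 : Matrix (Fin n) (Fin n) ℝ) =
        Matrix.fromRows (1 : Matrix (Fin n) (Fin n) ℝ) (-Yᵀ) *
          (D + C * Y + z • (Aᵀ + Cᵀ * Y))) ∧
    Matrix.fromBlocks C D A (-B) * Matrix.fromRows Y (1 : Matrix (Fin n) (Fin n) ℝ) =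
      Matrix.fromRows (1 : Matrix (Fin n) (Fin n) ℝ) (-Yᵀ) * (D + C * Y) ∧
    (Matrix.fromBlocks C D A (-B))ᵀ * Matrix.fromRows Y (1 : Matrix (Fin n) (Fin n) ℝ) =
      Matrix.fromRows (1 : Matrix (Fin n) (Fin n) ℝ) (-Yᵀ) * (Aᵀ + Cᵀ * Y) := by
  have hY' : Dᵀ * Y + Yᵀ * Aᵀ - Bᵀ + Yᵀ * Cᵀ * Y = 0 := by
    have := congrArg Matrix.transpose hY
    simpa [Matrix.transpose_add, Matrix.transpose_sub, Matrix.transpose_mul,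
      Matrix.mul_assoc] using this
  have h1 : Matrix.fromBlocks C D A (-B) * Matrix.fromRows Y (1 : Matrix (Fin n) (Fin n) ℝ) =
      Matrix.fromRows (1 : Matrix (Fin n) (Fin n) ℝ) (-Yᵀ) * (D + C * Y) := by
    have hb : A * Y + -B * 1 = -Yᵀ * (D + C * Y) := by
      simp only [Matrix.neg_mul, Matrix.mul_add, Matrix.mul_one]
      rw [← Matrix.mul_assoc]
      linear_combination (norm := abel) hY
    rw [Matrix.fromBlocks_mul_fromRows, Matrix.fromRows_mul, hb, Matrix.mul_one,
      Matrix.one_mul, add_comm (C * Y) D]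
  have h2 : (Matrix.fromBlocks C D A (-B))ᵀ * Matrix.fromRows Y (1 : Matrix (Fin n) (Fin n) ℝ) =
      Matrix.fromRows (1 : Matrix (Fin n) (Fin n) ℝ) (-Yᵀ) * (Aᵀ + Cᵀ * Y) := by
    have hb : Dᵀ * Y + (-B)ᵀ * 1 = -Yᵀ * (Aᵀ + Cᵀ * Y) := by
      simp only [Matrix.transpose_neg, Matrix.neg_mul, Matrix.mul_add, Matrix.mul_one]
      rw [← Matrix.mul_assoc]
      linear_combination (norm := abel) hY'
    rw [Matrix.fromBlocks_transpose, Matrix.fromBlocks_mul_fromRows, Matrix.fromRows_mul, hb,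
      Matrix.mul_one, Matrix.one_mul, add_comm (Cᵀ * Y) Aᵀ]
  refine ⟨fun z => ?_, h1, h2⟩
  rw [Matrix.add_mul, Matrix.smul_mul, h1, h2]
  simp [Matrix.mul_add, Matrix.mul_smul]
end

section
/- Let X solve DX + XᵀA − XᵀBX + C = 0 and Y solve YᵀD + AY − B + YᵀCY = 0, and suppose I − XY is invertible. Then for all z, M + zMᵀ = [[−Xᵀ, I],[I, −Yᵀ]] · diag(α(z), β(z)) · [[I, Y],[X, I]]^{-1}, where α(z) = A − BX + z(Dᵀ − BᵀX), β(z) = D + CY + z(Aᵀ + CᵀY), and M = [[C, D],[A, −B]]. -/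
open Matrix

theorem tnare_block_diagonalization (n : ℕ) (A B C D X Y : Matrix (Fin n) (Fin n) ℝ)
    (hX : D * X + Xᵀ * A - Xᵀ * B * X + C = 0)
    (hY : Yᵀ * D + A * Y - B + Yᵀ * C * Y = 0)
    (hXY : IsUnit ((1 : Matrix (Fin n) (Fin n) ℝ) - X * Y)) :
    ∀ z : ℝ,
      Matrix.fromBlocks C D A (-B) + z • (Matrix.fromBlocks C D A (-B))ᵀ =
        Matrix.fromBlocks (-Xᵀ) 1 1 (-Yᵀ) *
          Matrix.fromBlocks (A - B * X + z • (Dᵀ - Bᵀ * X)) 0 0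
            (D + C * Y + z • (Aᵀ + Cᵀ * Y)) *
          (Matrix.fromBlocks 1 Y X 1)⁻¹ := by
  intro z
  have hXt : Xᵀ * Dᵀ + Aᵀ * X - Xᵀ * Bᵀ * X + Cᵀ = 0 := by
    have := congrArg Matrix.transpose hX
    simpa [Matrix.transpose_add, Matrix.transpose_sub, Matrix.transpose_mul,
      Matrix.mul_assoc] using this
  have hYt : Dᵀ * Y + Yᵀ * Aᵀ - Bᵀ + Yᵀ * Cᵀ * Y = 0 := by
    have := congrArg Matrix.transpose hY
    simpa [Matrix.transpose_add, Matrix.transpose_sub, Matrix.transpose_mul,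
      Matrix.mul_assoc] using this
  have hC : C + D * X = Xᵀ * (B * X) - Xᵀ * A := by
    rw [← sub_eq_zero] at hX ⊢
    rw [← hX]; simp [Matrix.mul_assoc]; abel
  have hCt : Cᵀ + Aᵀ * X = Xᵀ * (Bᵀ * X) - Xᵀ * Dᵀ := by
    rw [← sub_eq_zero] at hXt ⊢
    rw [← hXt]; simp [Matrix.mul_assoc]; abel
  have hB : A * Y - B = -(Yᵀ * (C * Y)) - Yᵀ * D := by
    rw [← sub_eq_zero] at hY ⊢
    rw [← hY]; simp [Matrix.mul_assoc]; abel
  have hBt : Dᵀ * Y - Bᵀ = -(Yᵀ * (Cᵀ * Y)) - Yᵀ * Aᵀ := by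
    rw [← sub_eq_zero] at hYt ⊢
    rw [← hYt]; simp [Matrix.mul_assoc]; abel
  have hP : IsUnit (Matrix.fromBlocks (1 : Matrix (Fin n) (Fin n) ℝ) Y X 1).det := by
    rw [Matrix.det_fromBlocks_one₁₁]
    rwa [Matrix.isUnit_iff_isUnit_det] at hXY
  have heq : (Matrix.fromBlocks C D A (-B) + z • (Matrix.fromBlocks C D A (-B))ᵀ) *
        Matrix.fromBlocks 1 Y X 1 =
      Matrix.fromBlocks (-Xᵀ) 1 1 (-Yᵀ) *
        Matrix.fromBlocks (A - B * X + z • (Dᵀ - Bᵀ * X)) 0 0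
          (D + C * Y + z • (Aᵀ + Cᵀ * Y)) := by
    rw [Matrix.fromBlocks_transpose, Matrix.fromBlocks_smul, Matrix.fromBlocks_add,
      Matrix.fromBlocks_multiply, Matrix.fromBlocks_multiply, Matrix.fromBlocks_inj]
    refine ⟨?_, ?_, ?_, ?_⟩
    · simp only [mul_one, one_mul, add_mul, mul_add, mul_sub, sub_mul, Matrix.mul_smul,
        Matrix.smul_mul, Matrix.transpose_neg, smul_neg, neg_neg, mul_zero, add_zero, neg_mul]
      rw [show C + z • Cᵀ + (D * X + z • (Aᵀ * X)) = (C + D * X) + z • (Cᵀ + Aᵀ * X) from by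
        module, hC, hCt]
      module
    · simp only [mul_one, one_mul, add_mul, mul_add, mul_sub, sub_mul, Matrix.mul_smul,
        Matrix.smul_mul, Matrix.transpose_neg, smul_neg, neg_neg, mul_zero, zero_add, neg_mul]
      module
    · simp only [mul_one, one_mul, add_mul, mul_add, mul_sub, sub_mul, Matrix.mul_smul,
        Matrix.smul_mul, Matrix.transpose_neg, smul_neg, neg_neg, mul_zero, add_zero, neg_mul]
      module
    · simp only [mul_one, one_mul, add_mul, mul_add, mul_sub, sub_mul, Matrix.mul_smul,
        Matrix.smul_mul, Matrix.transpose_neg, smul_neg, neg_neg, mul_zero, zero_add, neg_mul]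
      rw [show A * Y + z • (Dᵀ * Y) + (-B + -(z • Bᵀ)) =
          (A * Y - B) + z • (Dᵀ * Y - Bᵀ) from by module, hB, hBt]
      module
  rw [← heq, Matrix.mul_nonsing_inv_cancel_right _ _ hP]
end

section
/- Let M ∈ ℂ^{2n×2n} and suppose U ∈ ℂ^{2n×2n} is unitary with R = UᵀMU anti-triangular (R_{ij} = 0 whenever i + j ≤ 2n). If the pencil M + zMᵀ is regular, then for each j = 1,…,2n not both r_{j,2n−j+1} and r_{2n−j+1,j} vanish, and every finite eigenvalue λ of the pencil satisfies r_{j,2n−j+1}·λ = −r_{2n−j+1,j} for some j; moreover, if λ_j is defined by r_{j,2n−j+1}λ_j = −r_{2n−j+1,j} (with λ_j = ∞ when r_{j,2n−j+1} = 0), then λ_j = 1/λ_{2n−j+1} for all j. -/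
open Matrix

/-- Inversion on `ℂ ∪ {∞}`, modelled as `Option ℂ` with `none = ∞`,
with the conventions `1/0 = ∞` and `1/∞ = 0`. -/
noncomputable def oinv : Option ℂ → Option ℂ
  | none => some 0
  | some a => if a = 0 then none else some a⁻¹

/-- The eigenvalue `λ_j = -r_{2n-j+1,j}/r_{j,2n-j+1}` read off the anti-diagonal of an
anti-triangular `R`, with `λ_j = ∞` (i.e. `none`) when `r_{j,2n-j+1} = 0`. -/
noncomputable def antiDiagEig {N : ℕ} (R : Matrix (Fin N) (Fin N) ℂ) (j : Fin N) : Option ℂ :=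
  if R j j.rev = 0 then none else some (-(R j.rev j) / R j j.rev)

/-- Determinant of an anti-triangular matrix, up to the sign of the reversal permutation. -/
lemma antiTriangular_det {N : ℕ} (S : Matrix (Fin N) (Fin N) ℂ)
    (hS : ∀ i j : Fin N, (i : ℕ) + (j : ℕ) + 2 ≤ N → S i j = 0) :
    ((Equiv.Perm.sign (Fin.revPerm : Equiv.Perm (Fin N)) : ℤ) : ℂ) * S.det
      = ∏ j, S j j.rev := by
  have h1 : (S.submatrix id (Fin.revPerm : Equiv.Perm (Fin N))).det
      = (Equiv.Perm.sign (Fin.revPerm : Equiv.Perm (Fin N)) : ℤ) * S.det :=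
    Matrix.det_permute' _ _
  have h2 : (S.submatrix id (Fin.revPerm : Equiv.Perm (Fin N))).BlockTriangular
      OrderDual.toDual := by
    intro i j hij
    simp only [OrderDual.toDual_lt_toDual] at hij
    simp only [Matrix.submatrix_apply, id_eq, Fin.revPerm_apply]
    apply hS
    have hj := j.2
    have := Fin.val_rev j
    omega
  have h3 := Matrix.det_of_lowerTriangular _ h2
  rw [h3] at h1
  rw [← h1]
  apply Finset.prod_congr rfl
  intro i _
  simp [Matrix.diag]

theorem antitriangular_spectrum (n : ℕ) (M U : Matrix (Fin (2 * n)) (Fin (2 * n)) ℂ)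
    (hU : U ∈ Matrix.unitaryGroup (Fin (2 * n)) ℂ)
    (R : Matrix (Fin (2 * n)) (Fin (2 * n)) ℂ) (hR : R = Uᵀ * M * U)
    (hanti : ∀ i j : Fin (2 * n), (i : ℕ) + (j : ℕ) + 2 ≤ 2 * n → R i j = 0)
    (hreg : ∃ z : ℂ, (M + z • Mᵀ).det ≠ 0) :
    (∀ j : Fin (2 * n), ¬(R j j.rev = 0 ∧ R j.rev j = 0)) ∧
    (∀ l : ℂ, (M + l • Mᵀ).det = 0 →
      ∃ j : Fin (2 * n), R j j.rev * l = -(R j.rev j)) ∧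
    (∀ j : Fin (2 * n), antiDiagEig R j = oinv (antiDiagEig R j.rev)) := by
  -- det U is nonzero
  have hUdet : U.det ≠ 0 := by
    have h1 : star U * U = 1 := hU.1
    have := congrArg Matrix.det h1
    rw [Matrix.det_mul, Matrix.det_one] at this
    intro h
    rw [h, mul_zero] at this
    exact zero_ne_one this
  -- the pencil in R coordinates
  have hRt : Rᵀ = Uᵀ * Mᵀ * U := by
    rw [hR]
    simp [Matrix.transpose_mul, Matrix.mul_assoc]
  have hpencil : ∀ z : ℂ, R + z • Rᵀ = Uᵀ * (M + z • Mᵀ) * U := by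
    intro z
    rw [hRt, hR]
    simp [Matrix.mul_add, Matrix.add_mul, Matrix.mul_smul, Matrix.smul_mul]
  set ε : ℂ := ((Equiv.Perm.sign (Fin.revPerm : Equiv.Perm (Fin (2 * n))) : ℤ) : ℂ) with hε
  have hεne : ε ≠ 0 := by
    rw [hε]
    exact Int.cast_ne_zero.mpr (Units.ne_zero _)
  have key : ∀ z : ℂ, ε * (U.det ^ 2 * (M + z • Mᵀ).det)
      = ∏ j, (R j j.rev + z * R j.rev j) := by
    intro z
    have hS : ∀ i j : Fin (2 * n), (i : ℕ) + (j : ℕ) + 2 ≤ 2 * n →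
        (R + z • Rᵀ) i j = 0 := by
      intro i j hij
      have h1 := hanti i j hij
      have h2 := hanti j i (by omega)
      simp [Matrix.transpose_apply, h1, h2]
    have h := antiTriangular_det (R + z • Rᵀ) hS
    have hprod : ∏ j, (R + z • Rᵀ) j j.rev = ∏ j : Fin (2 * n), (R j j.rev + z * R j.rev j) :=
      Finset.prod_congr rfl fun i _ => by simp [Matrix.transpose_apply]
    rw [hprod, hpencil z, Matrix.det_mul, Matrix.det_mul, Matrix.det_transpose] at h
    rw [← h]
    ring
  -- part 1
  have part1 : ∀ j : Fin (2 * n), ¬(R j j.rev = 0 ∧ R j.rev j = 0) := by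
    rintro j ⟨h1, h2⟩
    obtain ⟨z, hz⟩ := hreg
    have h := key z
    rw [Finset.prod_eq_zero (Finset.mem_univ j) (by rw [h1, h2]; ring)] at h
    rcases mul_eq_zero.mp h with h | h
    · exact hεne h
    rcases mul_eq_zero.mp h with h | h
    · exact pow_ne_zero 2 hUdet h
    · exact hz h
  refine ⟨part1, ?_, ?_⟩
  · intro l hl
    have h := key l
    rw [hl, mul_zero, mul_zero] at h
    obtain ⟨k, -, hk⟩ := Finset.prod_eq_zero_iff.mp h.symm
    refine ⟨k.rev, ?_⟩
    simp only [Fin.rev_rev]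
    linear_combination hk
  · intro j
    have h1 := part1 j
    unfold antiDiagEig oinv
    simp only [Fin.rev_rev]
    by_cases hb : R j.rev j = 0
    · have hc : R j j.rev ≠ 0 := fun hc => h1 ⟨hc, hb⟩
      simp [hb, hc]
    · by_cases hc : R j j.rev = 0
      · simp [hb, hc]
      · have hne : -(R j j.rev) / R j.rev j ≠ 0 := by
          simp [div_eq_zero_iff, hb, hc]
        simp only [hb, if_neg, hc, if_false]
        rw [if_neg hne]
        congr 1
        rw [inv_div, div_neg, neg_div]
end

section
/- Suppose W = I ⊗ D + (Aᵀ ⊗ I)Π is invertible with W^{-1} ≥ 0 entrywise, D is invertible with D^{-1} ≥ 0, B ≥ 0, C ≤ 0, and there exist positive vectors u, v ∈ ℝ^n with Au − Bv ≥ 0 and Cu + Dv ≥ 0. Then the sequence defined by X_0 = 0 and D X_{ℓ+1} + X_{ℓ+1}ᵀ A = X_ℓᵀ B X_ℓ − C satisfies 0 ≤ X_ℓ ≤ X_{ℓ+1} and X_ℓ u ≤ v for all ℓ ≥ 0. -/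
open Matrix

/-- The commutation (vec-permutation) matrix `Π = Σ_{i,j} e_i e_jᵀ ⊗ e_i e_jᵀ`,
satisfying `Π vec(X) = vec(Xᵀ)`. -/
def commMat (n : ℕ) : Matrix (Fin n × Fin n) (Fin n × Fin n) ℝ :=
  Matrix.of fun p q => if p.1 = q.2 ∧ p.2 = q.1 then 1 else 0

/-- The matrix `W = I ⊗ D + (Aᵀ ⊗ I)Π`, which acts on `vec(X)` as `vec(DX + XᵀA)`. -/
def Wmat (n : ℕ) (A D : Matrix (Fin n) (Fin n) ℝ) :
    Matrix (Fin n × Fin n) (Fin n × Fin n) ℝ :=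
  Matrix.kroneckerMap (· * ·) (1 : Matrix (Fin n) (Fin n) ℝ) D +
    Matrix.kroneckerMap (· * ·) Aᵀ (1 : Matrix (Fin n) (Fin n) ℝ) * commMat n

lemma Wmat_apply (n : ℕ) (A D : Matrix (Fin n) (Fin n) ℝ) (p q : Fin n × Fin n) :
    Wmat n A D p q = (if p.1 = q.1 then D p.2 q.2 else 0) +
      A q.2 p.1 * (if p.2 = q.1 then 1 else 0) := by
  obtain ⟨i, j⟩ := p; obtain ⟨k, l⟩ := q
  simp [Wmat, commMat, Matrix.mul_apply, Matrix.one_apply, Fintype.sum_prod_type,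
    mul_ite, ite_mul, ite_and, Finset.sum_ite_eq, Finset.sum_ite_eq', mul_comm]

lemma Wmat_mulVec (n : ℕ) (A D X : Matrix (Fin n) (Fin n) ℝ) :
    Wmat n A D *ᵥ (fun p => X p.2 p.1) =
      fun p => (D * X + Xᵀ * A) p.2 p.1 := by
  funext p
  obtain ⟨i, j⟩ := p
  simp only [mulVec, dotProduct, Wmat_apply, Matrix.add_apply, Matrix.mul_apply,
    transpose_apply, Fintype.sum_prod_type, add_mul, ite_mul, zero_mul, one_mul, mul_ite,
    mul_zero, mul_one, Finset.sum_add_distrib, Finset.sum_ite_eq, Finset.sum_ite_eq',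
    Finset.mem_univ, if_true]
  have key : ∀ (a : Fin n) (f : Fin n → Fin n → ℝ),
      (∑ x : Fin n, ∑ y : Fin n, if a = x then f x y else 0) = ∑ y : Fin n, f a y := by
    intro a f
    rw [Finset.sum_comm]
    simp
  rw [key i, key j]
  congr 1
  exact Finset.sum_congr rfl fun x _ => by ring

lemma mulVec_mono {m : Type*} [Fintype m] (M : Matrix m m ℝ)
    (hM : ∀ i j, 0 ≤ M i j) {x y : m → ℝ} (h : ∀ i, x i ≤ y i) (i : m) :
    (M *ᵥ x) i ≤ (M *ᵥ y) i :=
  Finset.sum_le_sum fun j _ => mul_le_mul_of_nonneg_left (h j) (hM i j)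

theorem monotone_iteration (n : ℕ) (A B C D : Matrix (Fin n) (Fin n) ℝ)
    (hW : IsUnit (Wmat n A D))
    (hWinv : ∀ p q, 0 ≤ (Wmat n A D)⁻¹ p q)
    (hD : IsUnit D) (hDinv : ∀ i j, 0 ≤ D⁻¹ i j)
    (hB : ∀ i j, 0 ≤ B i j) (hC : ∀ i j, C i j ≤ 0)
    (u v : Fin n → ℝ) (hu : ∀ i, 0 < u i) (hv : ∀ i, 0 < v i)
    (hAu : ∀ i, 0 ≤ (A *ᵥ u - B *ᵥ v) i) (hCu : ∀ i, 0 ≤ (C *ᵥ u + D *ᵥ v) i)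
    (X : ℕ → Matrix (Fin n) (Fin n) ℝ) (hX0 : X 0 = 0)
    (hrec : ∀ ℓ : ℕ, D * X (ℓ + 1) + (X (ℓ + 1))ᵀ * A = (X ℓ)ᵀ * B * X ℓ - C) :
    ∀ ℓ : ℕ, (∀ i j, 0 ≤ X ℓ i j) ∧ (∀ i j, X ℓ i j ≤ X (ℓ + 1) i j) ∧
      (∀ i, (X ℓ *ᵥ u) i ≤ v i) := by
  have hWdet : IsUnit (Wmat n A D).det := (Matrix.isUnit_iff_isUnit_det _).mp hW
  have hDdet : IsUnit D.det := (Matrix.isUnit_iff_isUnit_det _).mp hD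
  -- Key vec formula
  have hvec : ∀ ℓ : ℕ, (fun p : Fin n × Fin n => X (ℓ + 1) p.2 p.1) =
      (Wmat n A D)⁻¹ *ᵥ (fun p => ((X ℓ)ᵀ * B * X ℓ - C) p.2 p.1) := by
    intro ℓ
    have h1 : Wmat n A D *ᵥ (fun p : Fin n × Fin n => X (ℓ + 1) p.2 p.1) =
        fun p => ((X ℓ)ᵀ * B * X ℓ - C) p.2 p.1 := by
      rw [Wmat_mulVec, hrec ℓ]
    rw [← h1, mulVec_mulVec, Matrix.nonsing_inv_mul _ hWdet, one_mulVec]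
  -- quadratic map monotone / nonneg
  have hquad : ∀ (Y Z : Matrix (Fin n) (Fin n) ℝ), (∀ i j, 0 ≤ Y i j) →
      (∀ i j, Y i j ≤ Z i j) → ∀ i j,
      (Yᵀ * B * Y - C) i j ≤ (Zᵀ * B * Z - C) i j := by
    intro Y Z hY hYZ i j
    simp only [Matrix.sub_apply, Matrix.mul_apply, transpose_apply, sub_le_sub_iff_right]
    apply Finset.sum_le_sum
    intro k _
    refine mul_le_mul (Finset.sum_le_sum fun l _ =>
      mul_le_mul_of_nonneg_right (hYZ l i) (hB l k)) (hYZ k j) (hY k j)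
      (Finset.sum_nonneg fun l _ => mul_nonneg ((hY l i).trans (hYZ l i)) (hB l k))
  have hquad0 : ∀ (Y : Matrix (Fin n) (Fin n) ℝ), (∀ i j, 0 ≤ Y i j) →
      ∀ i j, 0 ≤ (Yᵀ * B * Y - C) i j := by
    intro Y hY i j
    simp only [Matrix.sub_apply, Matrix.mul_apply, transpose_apply, sub_nonneg]
    refine (hC i j).trans ?_
    refine Finset.sum_nonneg fun k _ => mul_nonneg ?_ (hY k j)
    exact Finset.sum_nonneg fun l _ => mul_nonneg (hY l i) (hB l k)
  -- step: Xℓ ≥ 0 → X(ℓ+1) ≥ 0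
  have hstep_nonneg : ∀ ℓ, (∀ i j, 0 ≤ X ℓ i j) → ∀ i j, 0 ≤ X (ℓ + 1) i j := by
    intro ℓ h i j
    have := congrFun (hvec ℓ) (j, i)
    simp only at this
    rw [this]
    exact Finset.sum_nonneg fun q _ => mul_nonneg (hWinv _ _) (hquad0 (X ℓ) h _ _)
  -- step: monotone
  have hstep_mono : ∀ ℓ, (∀ i j, 0 ≤ X ℓ i j) → (∀ i j, X ℓ i j ≤ X (ℓ + 1) i j) →
      ∀ i j, X (ℓ + 1) i j ≤ X (ℓ + 2) i j := by
    intro ℓ h0 h1 i j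
    have e1 := congrFun (hvec ℓ) (j, i)
    have e2 := congrFun (hvec (ℓ + 1)) (j, i)
    simp only at e1 e2
    rw [e1, e2]
    exact mulVec_mono _ hWinv (fun p => hquad (X ℓ) (X (ℓ + 1)) h0 h1 p.2 p.1) (j, i)
  -- step: X(ℓ+1) u ≤ v
  have hstep_u : ∀ ℓ, (∀ i j, 0 ≤ X ℓ i j) → (∀ i j, X ℓ i j ≤ X (ℓ + 1) i j) →
      (∀ i, (X ℓ *ᵥ u) i ≤ v i) → ∀ i, (X (ℓ + 1) *ᵥ u) i ≤ v i := by
    intro ℓ h0 h1 h2 i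
    have hXp : ∀ i j, 0 ≤ X (ℓ + 1) i j := fun i j => (h0 i j).trans (h1 i j)
    -- D *ᵥ (X(ℓ+1) *ᵥ u) ≤ D *ᵥ v
    have key : ∀ k, (D *ᵥ (X (ℓ + 1) *ᵥ u)) k ≤ (D *ᵥ v) k := by
      intro k
      have hrw : D *ᵥ (X (ℓ + 1) *ᵥ u) =
          (X ℓ)ᵀ *ᵥ (B *ᵥ (X ℓ *ᵥ u)) - C *ᵥ u - (X (ℓ + 1))ᵀ *ᵥ (A *ᵥ u) := by
        have := congrArg (· *ᵥ u) (hrec ℓ)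
        simp only [Matrix.add_mulVec, Matrix.sub_mulVec, ← mulVec_mulVec] at this
        have h' : D *ᵥ X (ℓ + 1) *ᵥ u =
            (X ℓ)ᵀ *ᵥ (B *ᵥ (X ℓ *ᵥ u)) - C *ᵥ u - (X (ℓ + 1))ᵀ *ᵥ (A *ᵥ u) := by
          rw [← this]; abel
        simpa using h'
      rw [hrw]
      -- estimate
      have t1 : ((X ℓ)ᵀ *ᵥ (B *ᵥ (X ℓ *ᵥ u))) k ≤ ((X ℓ)ᵀ *ᵥ (B *ᵥ v)) k :=
        mulVec_mono _ (fun i j => h0 j i) (fun i => mulVec_mono _ hB h2 i) k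
      have t2 : ((X ℓ)ᵀ *ᵥ (B *ᵥ v)) k ≤ ((X (ℓ + 1))ᵀ *ᵥ (B *ᵥ v)) k := by
        simp only [mulVec, dotProduct, transpose_apply]
        apply Finset.sum_le_sum
        intro l _
        exact mul_le_mul_of_nonneg_right (h1 l k)
          (Finset.sum_nonneg fun m _ => mul_nonneg (hB l m) (hv m).le)
      have t3 : ((X (ℓ + 1))ᵀ *ᵥ (B *ᵥ v)) k ≤ ((X (ℓ + 1))ᵀ *ᵥ (A *ᵥ u)) k := by
        apply mulVec_mono _ (fun i j => hXp j i)
        intro m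
        have := hAu m
        simp only [Pi.sub_apply, sub_nonneg] at this
        exact this
      have t4 : (-(C *ᵥ u)) k ≤ (D *ᵥ v) k := by
        have := hCu k
        simp only [Pi.add_apply] at this
        simp only [Pi.neg_apply]
        linarith
      simp only [Pi.sub_apply]
      have := t1.trans (t2.trans t3)
      simp only [Pi.neg_apply] at t4
      linarith
    -- multiply by D⁻¹
    have e : X (ℓ + 1) *ᵥ u = D⁻¹ *ᵥ (D *ᵥ (X (ℓ + 1) *ᵥ u)) := by
      rw [mulVec_mulVec, Matrix.nonsing_inv_mul _ hDdet, one_mulVec]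
    have e2 : v = D⁻¹ *ᵥ (D *ᵥ v) := by
      rw [mulVec_mulVec, Matrix.nonsing_inv_mul _ hDdet, one_mulVec]
    rw [e]
    calc (D⁻¹ *ᵥ (D *ᵥ (X (ℓ + 1) *ᵥ u))) i ≤ (D⁻¹ *ᵥ (D *ᵥ v)) i :=
          mulVec_mono _ hDinv key i
      _ = v i := by rw [← e2]
  -- induction
  intro ℓ
  induction ℓ with
  | zero =>
    refine ⟨fun i j => by simp [hX0], fun i j => ?_, fun i => by simp [hX0]; exact (hv i).le⟩
    have : 0 ≤ X 1 i j := hstep_nonneg 0 (fun i j => by simp [hX0]) i j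
    simpa [hX0] using this
  | succ m ih =>
    obtain ⟨h0, h1, h2⟩ := ih
    exact ⟨fun i j => (h0 i j).trans (h1 i j), hstep_mono m h0 h1, hstep_u m h0 h1 h2⟩
end

section
/- Under the assumptions of the monotone iteration (W^{-1} ≥ 0, D^{-1} ≥ 0, B ≥ 0, C ≤ 0, and positive u,v with Au − Bv ≥ 0, Cu + Dv ≥ 0), the T-NARE DX + XᵀA − XᵀBX + C = 0 has a minimal nonnegative solution X_min: X_min ≥ 0 solves the equation, and X_min ≤ Y entrywise for every nonnegative solution Y. -/
open Matrix

namespace TNARE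
variable {n : ℕ}
def vecM (X : Matrix (Fin n) (Fin n) ℝ) : Fin n × Fin n → ℝ := fun p => X p.2 p.1
def unvec (x : Fin n × Fin n → ℝ) : Matrix (Fin n) (Fin n) ℝ := fun i j => x (j, i)

lemma vecM_unvec (x : Fin n × Fin n → ℝ) : vecM (unvec x) = x := by
  funext p; cases p; rfl

lemma vecM_inj {X Y : Matrix (Fin n) (Fin n) ℝ} (h : vecM X = vecM Y) : X = Y := by
  funext i j; exact congrFun h (j, i)

lemma W_mulVec (A D : Matrix (Fin n) (Fin n) ℝ) (X : Matrix (Fin n) (Fin n) ℝ) :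
    Wmat n A D *ᵥ vecM X = vecM (D * X + Xᵀ * A) := by
  funext p
  obtain ⟨j, i⟩ := p
  simp only [Wmat, commMat, vecM, mulVec, dotProduct, Matrix.add_apply, Matrix.mul_apply,
    kroneckerMap_apply, Matrix.one_apply, of_apply, transpose_apply,
    Fintype.sum_prod_type, add_mul, Finset.sum_add_distrib]
  simp [Finset.mul_sum, Finset.sum_ite_eq, Finset.sum_ite_eq', ite_and,
    Finset.sum_comm (γ := Fin n), mul_comm, mul_assoc, mul_left_comm]

/-- mulVec monotone in the vector, matrix nonneg -/
lemma mulVec_mono {m : Type*} [Fintype m] {M : Matrix m m ℝ} (hM : ∀ i j, 0 ≤ M i j)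
    {x y : m → ℝ} (h : ∀ i, x i ≤ y i) : ∀ i, (M *ᵥ x) i ≤ (M *ᵥ y) i := by
  intro i
  exact Finset.sum_le_sum fun j _ => mul_le_mul_of_nonneg_left (h j) (hM i j)

lemma mulVec_nonneg {m : Type*} [Fintype m] {M : Matrix m m ℝ} (hM : ∀ i j, 0 ≤ M i j)
    {x : m → ℝ} (h : ∀ i, 0 ≤ x i) : ∀ i, 0 ≤ (M *ᵥ x) i := by
  intro i
  exact Finset.sum_nonneg fun j _ => mul_nonneg (hM i j) (h j)

/-- mulVec monotone in the matrix, vector nonneg -/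
lemma mulVec_mono_mat {m : Type*} [Fintype m] {M M' : Matrix m m ℝ}
    (h : ∀ i j, M i j ≤ M' i j) {x : m → ℝ} (hx : ∀ i, 0 ≤ x i) :
    ∀ i, (M *ᵥ x) i ≤ (M' *ᵥ x) i := by
  intro i
  exact Finset.sum_le_sum fun j _ => mul_le_mul_of_nonneg_right (h i j) (hx j)

/-- quadratic form monotone -/
lemma quad_mono {B : Matrix (Fin n) (Fin n) ℝ} (hB : ∀ i j, 0 ≤ B i j)
    {X Y : Matrix (Fin n) (Fin n) ℝ} (hX : ∀ i j, 0 ≤ X i j) (hXY : ∀ i j, X i j ≤ Y i j) :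
    ∀ i j, (Xᵀ * B * X) i j ≤ (Yᵀ * B * Y) i j := by
  intro i j
  simp only [Matrix.mul_apply, transpose_apply, Finset.sum_mul]
  refine Finset.sum_le_sum fun k _ => Finset.sum_le_sum fun l _ => ?_
  calc X l i * B l k * X k j = B l k * X l i * X k j := by ring
    _ ≤ B l k * Y l i * Y k j := by
        exact mul_le_mul (mul_le_mul_of_nonneg_left (hXY l i) (hB l k)) (hXY k j) (hX k j)
          (mul_nonneg (hB l k) ((hX l i).trans (hXY l i)))
    _ = Y l i * B l k * Y k j := by ring


variable (A B C D : Matrix (Fin n) (Fin n) ℝ)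

/-- one step of the fixed-point iteration -/
noncomputable def step (X : Matrix (Fin n) (Fin n) ℝ) : Matrix (Fin n) (Fin n) ℝ :=
  unvec ((Wmat n A D)⁻¹ *ᵥ vecM (Xᵀ * B * X - C))

/-- the iteration sequence -/
noncomputable def seq : ℕ → Matrix (Fin n) (Fin n) ℝ
  | 0 => 0
  | ℓ + 1 => step A B C D (seq ℓ)

section Main
variable (hW : IsUnit (Wmat n A D))

lemma vecM_step (X : Matrix (Fin n) (Fin n) ℝ) :
    vecM (step A B C D X) = (Wmat n A D)⁻¹ *ᵥ vecM (Xᵀ * B * X - C) :=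
  vecM_unvec _

include hW in
lemma step_eq (X : Matrix (Fin n) (Fin n) ℝ) :
    D * step A B C D X + (step A B C D X)ᵀ * A = Xᵀ * B * X - C := by
  have hdet : IsUnit (Wmat n A D).det := (Matrix.isUnit_iff_isUnit_det _).mp hW
  apply vecM_inj
  rw [← W_mulVec, vecM_step, mulVec_mulVec, Matrix.mul_nonsing_inv _ hdet, one_mulVec]

include hW in
/-- for a solution `Y`, `vec Y = W⁻¹ vec (YᵀBY - C)` -/
lemma vecM_of_sol {Y : Matrix (Fin n) (Fin n) ℝ}
    (hY : D * Y + Yᵀ * A - Yᵀ * B * Y + C = 0) :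
    vecM Y = (Wmat n A D)⁻¹ *ᵥ vecM (Yᵀ * B * Y - C) := by
  have hdet : IsUnit (Wmat n A D).det := (Matrix.isUnit_iff_isUnit_det _).mp hW
  have h1 : D * Y + Yᵀ * A = Yᵀ * B * Y - C := by
    ext i j
    have := congrFun (congrFun hY i) j
    simp only [Matrix.add_apply, Matrix.sub_apply, Matrix.zero_apply] at this ⊢
    linarith
  rw [← h1, ← W_mulVec, mulVec_mulVec, Matrix.nonsing_inv_mul _ hdet, one_mulVec]


end Main
section Mono
variable (hWinv : ∀ p q, 0 ≤ (Wmat n A D)⁻¹ p q)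
  (hB : ∀ i j, 0 ≤ B i j) (hC : ∀ i j, C i j ≤ 0)

include hWinv hB hC in
lemma step_nonneg {X : Matrix (Fin n) (Fin n) ℝ} (hX : ∀ i j, 0 ≤ X i j) :
    ∀ i j, 0 ≤ step A B C D X i j := by
  intro i j
  have : ∀ p, 0 ≤ vecM (Xᵀ * B * X - C) p := by
    rintro ⟨q, p⟩
    simp only [vecM, Matrix.sub_apply]
    have h1 : 0 ≤ (Xᵀ * B * X) p q := by
      simp only [Matrix.mul_apply, transpose_apply]
      exact Finset.sum_nonneg fun k _ => mul_nonneg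
        (Finset.sum_nonneg fun l _ => mul_nonneg (hX l p) (hB l k)) (hX k q)
    linarith [hC p q]
  exact mulVec_nonneg hWinv this (j, i)

include hWinv hB in
lemma step_mono {X Y : Matrix (Fin n) (Fin n) ℝ} (hX : ∀ i j, 0 ≤ X i j)
    (hXY : ∀ i j, X i j ≤ Y i j) :
    ∀ i j, step A B C D X i j ≤ step A B C D Y i j := by
  intro i j
  have : ∀ p, vecM (Xᵀ * B * X - C) p ≤ vecM (Yᵀ * B * Y - C) p := by
    rintro ⟨q, p⟩
    simp only [vecM, Matrix.sub_apply]
    have := quad_mono hB hX hXY p q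
    linarith
  exact mulVec_mono hWinv this (j, i)

include hWinv hB hC in
lemma seq_nonneg : ∀ ℓ i j, 0 ≤ seq A B C D ℓ i j := by
  intro ℓ
  induction ℓ with
  | zero => intro i j; simp [seq]
  | succ ℓ ih => exact step_nonneg A B C D hWinv hB hC ih

include hWinv hB hC in
lemma seq_mono : ∀ ℓ i j, seq A B C D ℓ i j ≤ seq A B C D (ℓ + 1) i j := by
  intro ℓ
  induction ℓ with
  | zero =>
    intro i j
    simpa [seq] using step_nonneg A B C D hWinv hB hC (X := 0) (by simp) i j
  | succ ℓ ih =>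
    exact step_mono A B C D hWinv hB (seq_nonneg A B C D hWinv hB hC ℓ) ih

include hWinv hB hC in
lemma seq_mono' : ∀ {k ℓ}, k ≤ ℓ → ∀ i j, seq A B C D k i j ≤ seq A B C D ℓ i j := by
  intro k ℓ h
  induction h with
  | refl => exact fun i j => le_refl _
  | step h ih => exact fun i j => (ih i j).trans (seq_mono A B C D hWinv hB hC _ i j)

end Mono
section Sol
variable (hWinv : ∀ p q, 0 ≤ (Wmat n A D)⁻¹ p q)
  (hB : ∀ i j, 0 ≤ B i j) (hC : ∀ i j, C i j ≤ 0)

include hWinv hB hC in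
lemma seq_le_sol (hW : IsUnit (Wmat n A D)) {Y : Matrix (Fin n) (Fin n) ℝ}
    (hYnn : ∀ i j, 0 ≤ Y i j) (hY : D * Y + Yᵀ * A - Yᵀ * B * Y + C = 0) :
    ∀ ℓ i j, seq A B C D ℓ i j ≤ Y i j := by
  intro ℓ
  induction ℓ with
  | zero => intro i j; simpa [seq] using hYnn i j
  | succ ℓ ih =>
    intro i j
    have hle : ∀ p, vecM ((seq A B C D ℓ)ᵀ * B * seq A B C D ℓ - C) p ≤
        vecM (Yᵀ * B * Y - C) p := by
      rintro ⟨q, p⟩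
      simp only [vecM, Matrix.sub_apply]
      have := quad_mono hB (seq_nonneg A B C D hWinv hB hC ℓ) ih p q
      linarith
    have := mulVec_mono hWinv hle (j, i)
    rw [← vecM_step] at this
    calc seq A B C D (ℓ+1) i j = vecM (step A B C D (seq A B C D ℓ)) (j, i) := rfl
      _ ≤ ((Wmat n A D)⁻¹ *ᵥ vecM (Yᵀ * B * Y - C)) (j, i) := this
      _ = vecM Y (j, i) := by rw [← vecM_of_sol A B C D hW hY]
      _ = Y i j := rfl

end Sol
section Bound
variable (hW : IsUnit (Wmat n A D))
  (hWinv : ∀ p q, 0 ≤ (Wmat n A D)⁻¹ p q)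
  (hD : IsUnit D) (hDinv : ∀ i j, 0 ≤ D⁻¹ i j)
  (hB : ∀ i j, 0 ≤ B i j) (hC : ∀ i j, C i j ≤ 0)
  (u v : Fin n → ℝ) (hu : ∀ i, 0 < u i) (hv : ∀ i, 0 < v i)
  (hAu : ∀ i, 0 ≤ (A *ᵥ u - B *ᵥ v) i) (hCu : ∀ i, 0 ≤ (C *ᵥ u + D *ᵥ v) i)

include hW hWinv hD hDinv hB hC hv hAu hCu in
lemma seq_bound : ∀ ℓ i, (seq A B C D ℓ *ᵥ u) i ≤ v i := by
  have hDdet : IsUnit D.det := (Matrix.isUnit_iff_isUnit_det _).mp hD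
  have hBv : ∀ i, 0 ≤ (B *ᵥ v) i :=
    mulVec_nonneg hB fun i => (hv i).le
  have hAu' : ∀ i, 0 ≤ (A *ᵥ u) i := by
    intro i
    have := hAu i
    simp only [Pi.sub_apply] at this
    linarith [hBv i]
  intro ℓ
  induction ℓ with
  | zero => intro i; simpa [seq] using (hv i).le
  | succ ℓ ih =>
    set X := seq A B C D ℓ with hX
    set X' := seq A B C D (ℓ + 1) with hX'
    have hXnn := seq_nonneg A B C D hWinv hB hC ℓ
    have hXX' := seq_mono A B C D hWinv hB hC ℓ
    have heq : D * X' + X'ᵀ * A = Xᵀ * B * X - C := step_eq A B C D hW X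
    -- apply to u
    have heq' : D *ᵥ (X' *ᵥ u) + X'ᵀ *ᵥ (A *ᵥ u) = Xᵀ *ᵥ (B *ᵥ (X *ᵥ u)) - C *ᵥ u := by
      have := congrArg (fun M => M *ᵥ u) heq
      simpa [add_mulVec, sub_mulVec, ← mulVec_mulVec, Matrix.mul_assoc] using this
    -- inequalities
    have h1 : ∀ i, (Xᵀ *ᵥ (B *ᵥ (X *ᵥ u))) i ≤ (Xᵀ *ᵥ (A *ᵥ u)) i := by
      intro i
      apply mulVec_mono (fun i j => hXnn j i)
      intro k
      have h1a : (B *ᵥ (X *ᵥ u)) k ≤ (B *ᵥ v) k := mulVec_mono hB ih k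
      have := hAu k
      simp only [Pi.sub_apply] at this
      linarith
    have h2 : ∀ i, (Xᵀ *ᵥ (A *ᵥ u)) i ≤ (X'ᵀ *ᵥ (A *ᵥ u)) i := by
      intro i
      exact mulVec_mono_mat (fun i j => hXX' j i) hAu' i
    have h3 : ∀ i, (D *ᵥ (X' *ᵥ u)) i ≤ (D *ᵥ v) i := by
      intro i
      have e := congrFun heq' i
      simp only [Pi.add_apply, Pi.sub_apply] at e
      have := hCu i
      simp only [Pi.add_apply] at this
      linarith [h1 i, h2 i]
    have h4 : ∀ i, (D⁻¹ *ᵥ (D *ᵥ (X' *ᵥ u))) i ≤ (D⁻¹ *ᵥ (D *ᵥ v)) i :=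
      mulVec_mono hDinv h3
    intro i
    have e1 : D⁻¹ *ᵥ (D *ᵥ (X' *ᵥ u)) = X' *ᵥ u := by
      rw [mulVec_mulVec, Matrix.nonsing_inv_mul _ hDdet, one_mulVec]
    have e2 : D⁻¹ *ᵥ (D *ᵥ v) = v := by
      rw [mulVec_mulVec, Matrix.nonsing_inv_mul _ hDdet, one_mulVec]
    have := h4 i
    rw [e1, e2] at this
    exact this

end Bound

end TNARE


open TNARE

set_option maxHeartbeats 1000000 in
theorem minimal_nonnegative_solution (n : ℕ) (A B C D : Matrix (Fin n) (Fin n) ℝ)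
    (hW : IsUnit (Wmat n A D))
    (hWinv : ∀ p q, 0 ≤ (Wmat n A D)⁻¹ p q)
    (hD : IsUnit D) (hDinv : ∀ i j, 0 ≤ D⁻¹ i j)
    (hB : ∀ i j, 0 ≤ B i j) (hC : ∀ i j, C i j ≤ 0)
    (u v : Fin n → ℝ) (hu : ∀ i, 0 < u i) (hv : ∀ i, 0 < v i)
    (hAu : ∀ i, 0 ≤ (A *ᵥ u - B *ᵥ v) i) (hCu : ∀ i, 0 ≤ (C *ᵥ u + D *ᵥ v) i) :
    ∃ Xmin : Matrix (Fin n) (Fin n) ℝ,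
      (∀ i j, 0 ≤ Xmin i j) ∧
      D * Xmin + Xminᵀ * A - Xminᵀ * B * Xmin + C = 0 ∧
      ∀ Y : Matrix (Fin n) (Fin n) ℝ, (∀ i j, 0 ≤ Y i j) →
        D * Y + Yᵀ * A - Yᵀ * B * Y + C = 0 → ∀ i j, Xmin i j ≤ Y i j := by
  have hbound := seq_bound A B C D hW hWinv hD hDinv hB hC u v hv hAu hCu
  have hbdd : ∀ i j, BddAbove (Set.range fun ℓ => seq A B C D ℓ i j) := by
    intro i j
    refine ⟨v i / u j, ?_⟩
    rintro x ⟨ℓ, rfl⟩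
    have h1 : seq A B C D ℓ i j * u j ≤ (seq A B C D ℓ *ᵥ u) i := by
      unfold mulVec dotProduct
      exact Finset.single_le_sum
        (f := fun k => seq A B C D ℓ i k * u k)
        (fun k _ => mul_nonneg (seq_nonneg A B C D hWinv hB hC ℓ i k) (hu k).le)
        (Finset.mem_univ j)
    exact (le_div_iff₀ (hu j)).mpr (h1.trans (hbound ℓ i))
  have hmono : ∀ i j, Monotone fun ℓ => seq A B C D ℓ i j := fun i j =>
    monotone_nat_of_le_succ fun ℓ => seq_mono A B C D hWinv hB hC ℓ i j
  set Xmin : Matrix (Fin n) (Fin n) ℝ := fun i j => ⨆ ℓ, seq A B C D ℓ i j with hXmin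
  have htend : ∀ i j, Filter.Tendsto (fun ℓ => seq A B C D ℓ i j) Filter.atTop (nhds (Xmin i j)) :=
    fun i j => tendsto_atTop_ciSup (hmono i j) (hbdd i j)
  have hM : Filter.Tendsto (fun ℓ => seq A B C D ℓ) Filter.atTop (nhds Xmin) := by
    refine tendsto_pi_nhds.mpr fun i => ?_
    refine tendsto_pi_nhds.mpr fun j => ?_
    exact htend i j
  have hM' : Filter.Tendsto (fun ℓ => seq A B C D (ℓ + 1)) Filter.atTop (nhds Xmin) :=
    hM.comp (Filter.tendsto_add_atTop_nat 1)
  refine ⟨Xmin, ?_, ?_, ?_⟩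
  · intro i j
    have := le_ciSup (hbdd i j) 0
    simpa [seq] using this
  · have hMT : Filter.Tendsto (fun ℓ => (seq A B C D ℓ)ᵀ) Filter.atTop (nhds Xminᵀ) := by
      refine tendsto_pi_nhds.mpr fun i => ?_
      refine tendsto_pi_nhds.mpr fun j => ?_
      exact htend j i
    have hM'T : Filter.Tendsto (fun ℓ => (seq A B C D (ℓ+1))ᵀ) Filter.atTop (nhds Xminᵀ) :=
      hMT.comp (Filter.tendsto_add_atTop_nat 1)
    have hzero : ∀ ℓ, D * seq A B C D (ℓ+1) + (seq A B C D (ℓ+1))ᵀ * A -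
        (seq A B C D ℓ)ᵀ * B * (seq A B C D ℓ) + C = 0 := by
      intro ℓ
      have heq : D * seq A B C D (ℓ+1) + (seq A B C D (ℓ+1))ᵀ * A =
          (seq A B C D ℓ)ᵀ * B * (seq A B C D ℓ) - C := step_eq A B C D hW _
      rw [heq]
      abel
    have h1 : Filter.Tendsto (fun ℓ => D * seq A B C D (ℓ+1) + (seq A B C D (ℓ+1))ᵀ * A -
        (seq A B C D ℓ)ᵀ * B * (seq A B C D ℓ) + C) Filter.atTop
        (nhds (D * Xmin + Xminᵀ * A - Xminᵀ * B * Xmin + C)) :=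
      (((tendsto_const_nhds.mul hM').add (hM'T.mul tendsto_const_nhds)).sub
        ((hMT.mul tendsto_const_nhds).mul hM)).add tendsto_const_nhds
    have h2 : Filter.Tendsto (fun ℓ => D * seq A B C D (ℓ+1) + (seq A B C D (ℓ+1))ᵀ * A -
        (seq A B C D ℓ)ᵀ * B * (seq A B C D ℓ) + C) Filter.atTop
        (nhds (0 : Matrix (Fin n) (Fin n) ℝ)) := by
      simp only [hzero]
      exact tendsto_const_nhds
    exact tendsto_nhds_unique h1 h2
  · intro Y hYnn hY i j
    exact ciSup_le fun ℓ => seq_le_sol A B C D hWinv hB hC hW hYnn hY ℓ i j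
end

section
/- Suppose X solves DX + XᵀA − XᵀBX + C = 0 with Dᵀ − BᵀX invertible, and let W = (Dᵀ − BᵀX)^{-1}(A − BX), M = [[C, D],[A, −B]]. Then M·[I; X] = Mᵀ·[I; X]·W. -/
open Matrix

theorem tnare_doubling_relation (n : ℕ) (A B C D X : Matrix (Fin n) (Fin n) ℝ)
    (hX : D * X + Xᵀ * A - Xᵀ * B * X + C = 0)
    (hDBX : IsUnit (Dᵀ - Bᵀ * X)) :
    Matrix.fromBlocks C D A (-B) * Matrix.fromRows (1 : Matrix (Fin n) (Fin n) ℝ) X =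
      (Matrix.fromBlocks C D A (-B))ᵀ * Matrix.fromRows (1 : Matrix (Fin n) (Fin n) ℝ) X *
        ((Dᵀ - Bᵀ * X)⁻¹ * (A - B * X)) := by
  have hinv : (Dᵀ - Bᵀ * X) * (Dᵀ - Bᵀ * X)⁻¹ = 1 :=
    Matrix.mul_nonsing_inv _ ((Matrix.isUnit_iff_isUnit_det _).mp hDBX)
  have hXT : Xᵀ * Dᵀ + Aᵀ * X - Xᵀ * Bᵀ * X + Cᵀ = 0 := by
    have := congrArg Matrix.transpose hX
    simpa [Matrix.transpose_add, Matrix.transpose_sub, Matrix.transpose_mul,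
      Matrix.mul_assoc] using this
  rw [Matrix.fromBlocks_transpose, Matrix.fromBlocks_mul_fromRows,
    Matrix.fromBlocks_mul_fromRows, Matrix.fromRows_mul]
  simp only [Matrix.mul_one, Matrix.transpose_neg, Matrix.neg_mul]
  have h1 : Cᵀ + Aᵀ * X = -(Xᵀ * (Dᵀ - Bᵀ * X)) := by
    rw [Matrix.mul_sub]
    linear_combination (norm := noncomm_ring) hXT
  have h2 : C + D * X = -(Xᵀ * (A - B * X)) := by
    rw [Matrix.mul_sub]
    linear_combination (norm := noncomm_ring) hX
  rw [h1, h2, Matrix.neg_mul, Matrix.mul_assoc, ← Matrix.mul_assoc (Dᵀ - Bᵀ * X), hinv,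
    Matrix.one_mul, ← sub_eq_add_neg Dᵀ, ← sub_eq_add_neg A,
    ← Matrix.mul_assoc, hinv, Matrix.one_mul]
end

section
/- Suppose Y solves the dual equation YᵀD + AY − B + YᵀCY = 0 with D + CY invertible, and let V = (D + CY)^{-1}(Aᵀ + CᵀY), M = [[C, D],[A, −B]]. Then M·[Y; I]·V = Mᵀ·[Y; I]. -/
open Matrix

theorem dual_tnare_doubling_relation (n : ℕ) (A B C D Y : Matrix (Fin n) (Fin n) ℝ)
    (hY : Yᵀ * D + A * Y - B + Yᵀ * C * Y = 0)
    (hDCY : IsUnit (D + C * Y)) :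
    Matrix.fromBlocks C D A (-B) * Matrix.fromRows Y (1 : Matrix (Fin n) (Fin n) ℝ) *
        ((D + C * Y)⁻¹ * (Aᵀ + Cᵀ * Y)) =
      (Matrix.fromBlocks C D A (-B))ᵀ * Matrix.fromRows Y (1 : Matrix (Fin n) (Fin n) ℝ) := by
  have hdet : IsUnit (D + C * Y).det := (Matrix.isUnit_iff_isUnit_det _).mp hDCY
  have hinv : (D + C * Y) * (D + C * Y)⁻¹ = 1 := Matrix.mul_nonsing_inv _ hdet
  have h2 : (A * Y - B) + (Yᵀ * D + Yᵀ * C * Y) = 0 := by rw [← hY]; abel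
  have hB : A * Y - B = -(Yᵀ * (D + C * Y)) := by
    rw [Matrix.mul_add, ← Matrix.mul_assoc]
    exact eq_neg_of_add_eq_zero_left h2
  have hBT : Bᵀ = Dᵀ * Y + Yᵀ * Aᵀ + Yᵀ * Cᵀ * Y := by
    have h3 : B = Yᵀ * D + A * Y + Yᵀ * C * Y := by
      have := hY
      rw [sub_add_eq_add_sub, sub_eq_zero] at this
      exact this.symm
    rw [h3]
    simp [Matrix.transpose_add, Matrix.transpose_mul, Matrix.mul_assoc]
  have htop : (C * Y + D * 1) * ((D + C * Y)⁻¹ * (Aᵀ + Cᵀ * Y)) = Cᵀ * Y + Aᵀ * 1 := by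
    rw [mul_one, mul_one, ← Matrix.mul_assoc, add_comm (C * Y) D, hinv, Matrix.one_mul,
      add_comm]
  have hbot : (A * Y + -B * 1) * ((D + C * Y)⁻¹ * (Aᵀ + Cᵀ * Y)) = Dᵀ * Y + (-B)ᵀ * 1 := by
    rw [mul_one, mul_one, ← sub_eq_add_neg, hB, neg_mul, Matrix.mul_assoc,
      ← Matrix.mul_assoc (D + C * Y), hinv, Matrix.one_mul, Matrix.transpose_neg, hBT,
      Matrix.mul_add]
    abel_nf
    rw [Matrix.mul_assoc Yᵀ Cᵀ Y]
  rw [Matrix.fromBlocks_mul_fromRows, Matrix.fromBlocks_transpose,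
    Matrix.fromBlocks_mul_fromRows, Matrix.fromRows_mul, htop, hbot]
end

section
/- Let M = [[C, D],[A, −B]] and S = [[Cᵀ, D],[Dᵀ, −B]]. The pencil M + zMᵀ admits a right-equivalent standard-structured pencil N + zK with N = [[E₀, 0],[−P₀, I]] and K = [[I, −G₀],[0, F₀]] satisfying N = S^{-1}M and K = S^{-1}Mᵀ if and only if S is invertible; when S is invertible, F₀ and other blocks are uniquely determined by S^{-1}M and S^{-1}Mᵀ, and in particular the (1,2) block of S^{-1}M is zero and the (2,1) block of S^{-1}Mᵀ is zero. -/
open Matrix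

private lemma col2zero {n : ℕ} (W : Matrix (Fin n ⊕ Fin n) (Fin n ⊕ Fin n) ℝ)
    (X Y : Matrix (Fin n) (Fin n) ℝ) :
    W * Matrix.fromBlocks X (0 : Matrix (Fin n) (Fin n) ℝ) Y (0 : Matrix (Fin n) (Fin n) ℝ) =
      Matrix.fromBlocks (W.toBlocks₁₁ * X + W.toBlocks₁₂ * Y) (0 : Matrix (Fin n) (Fin n) ℝ)
        (W.toBlocks₂₁ * X + W.toBlocks₂₂ * Y) (0 : Matrix (Fin n) (Fin n) ℝ) := by
  conv_lhs => rw [← Matrix.fromBlocks_toBlocks W]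
  rw [Matrix.fromBlocks_multiply]
  simp

private lemma col1zero {n : ℕ} (W : Matrix (Fin n ⊕ Fin n) (Fin n ⊕ Fin n) ℝ)
    (X Y : Matrix (Fin n) (Fin n) ℝ) :
    W * Matrix.fromBlocks (0 : Matrix (Fin n) (Fin n) ℝ) X (0 : Matrix (Fin n) (Fin n) ℝ) Y =
      Matrix.fromBlocks (0 : Matrix (Fin n) (Fin n) ℝ) (W.toBlocks₁₁ * X + W.toBlocks₁₂ * Y)
        (0 : Matrix (Fin n) (Fin n) ℝ) (W.toBlocks₂₁ * X + W.toBlocks₂₂ * Y) := by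
  conv_lhs => rw [← Matrix.fromBlocks_toBlocks W]
  rw [Matrix.fromBlocks_multiply]
  simp

private lemma key {n : ℕ} (A B C D : Matrix (Fin n) (Fin n) ℝ)
    (hS : IsUnit (Matrix.fromBlocks Cᵀ D Dᵀ (-B))) :
    ∃ a b c d : Matrix (Fin n) (Fin n) ℝ,
      (Matrix.fromBlocks Cᵀ D Dᵀ (-B))⁻¹ * Matrix.fromBlocks C D A (-B) =
        Matrix.fromBlocks a 0 b 1 ∧
      (Matrix.fromBlocks Cᵀ D Dᵀ (-B))⁻¹ * (Matrix.fromBlocks C D A (-B))ᵀ =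
        Matrix.fromBlocks 1 c 0 d := by
  set S := Matrix.fromBlocks Cᵀ D Dᵀ (-B) with hSdef
  have hinv : S⁻¹ * S = 1 := Matrix.nonsing_inv_mul S ((Matrix.isUnit_iff_isUnit_det S).mp hS)
  set W := S⁻¹
  have hM : Matrix.fromBlocks C D A (-B) = S + Matrix.fromBlocks (C - Cᵀ) 0 (A - Dᵀ) 0 := by
    rw [hSdef, Matrix.fromBlocks_add]
    rw [Matrix.fromBlocks_inj]
    refine ⟨?_, ?_, ?_, ?_⟩ <;> abel
  have hMT : (Matrix.fromBlocks C D A (-B))ᵀ = S + Matrix.fromBlocks 0 (Aᵀ - D) 0 (-Bᵀ + B) := by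
    rw [Matrix.fromBlocks_transpose, hSdef, Matrix.fromBlocks_add, Matrix.fromBlocks_inj]
    refine ⟨?_, ?_, ?_, ?_⟩ <;> simp
  refine ⟨1 + (W.toBlocks₁₁ * (C - Cᵀ) + W.toBlocks₁₂ * (A - Dᵀ)),
    W.toBlocks₂₁ * (C - Cᵀ) + W.toBlocks₂₂ * (A - Dᵀ),
    W.toBlocks₁₁ * (Aᵀ - D) + W.toBlocks₁₂ * (-Bᵀ + B),
    1 + (W.toBlocks₂₁ * (Aᵀ - D) + W.toBlocks₂₂ * (-Bᵀ + B)), ?_, ?_⟩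
  · rw [hM, mul_add, hinv, col2zero, ← Matrix.fromBlocks_one, Matrix.fromBlocks_add,
      Matrix.fromBlocks_inj]
    refine ⟨rfl, ?_, ?_, ?_⟩ <;> simp
  · rw [hMT, mul_add, hinv, col1zero, ← Matrix.fromBlocks_one, Matrix.fromBlocks_add,
      Matrix.fromBlocks_inj]
    refine ⟨?_, ?_, ?_, rfl⟩ <;> simp

theorem doubling_initialization_iff (n : ℕ) (A B C D : Matrix (Fin n) (Fin n) ℝ) :
    ((∃ E₀ P₀ G₀ F₀ : Matrix (Fin n) (Fin n) ℝ,
        (Matrix.fromBlocks Cᵀ D Dᵀ (-B))⁻¹ * Matrix.fromBlocks C D A (-B) =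
          Matrix.fromBlocks E₀ 0 (-P₀) 1 ∧
        (Matrix.fromBlocks Cᵀ D Dᵀ (-B))⁻¹ * (Matrix.fromBlocks C D A (-B))ᵀ =
          Matrix.fromBlocks 1 (-G₀) 0 F₀) ↔
      IsUnit (Matrix.fromBlocks Cᵀ D Dᵀ (-B))) ∧
    (IsUnit (Matrix.fromBlocks Cᵀ D Dᵀ (-B)) →
      Matrix.toBlocks₁₂
        ((Matrix.fromBlocks Cᵀ D Dᵀ (-B))⁻¹ * Matrix.fromBlocks C D A (-B)) = 0 ∧
      Matrix.toBlocks₂₁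
        ((Matrix.fromBlocks Cᵀ D Dᵀ (-B))⁻¹ * (Matrix.fromBlocks C D A (-B))ᵀ) = 0) := by
  constructor
  · constructor
    · rintro ⟨E₀, P₀, G₀, F₀, h1, h2⟩
      by_contra hS
      have hdet : ¬ IsUnit (Matrix.fromBlocks Cᵀ D Dᵀ (-B)).det := fun h =>
        hS ((Matrix.isUnit_iff_isUnit_det _).mpr h)
      rw [Matrix.nonsing_inv_apply_not_isUnit _ hdet, zero_mul] at h1
      have h22 : (1 : Matrix (Fin n) (Fin n) ℝ) = 0 := by
        have := congrArg Matrix.toBlocks₂₂ h1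
        simpa [Matrix.toBlocks_fromBlocks₂₂] using this.symm.trans (show Matrix.toBlocks₂₂ (0 : Matrix (Fin n ⊕ Fin n) (Fin n ⊕ Fin n) ℝ) = 0 by ext i j; rfl)
      have hone : (1 : Matrix (Fin n ⊕ Fin n) (Fin n ⊕ Fin n) ℝ) = 0 := by
        rw [← Matrix.fromBlocks_one, h22]
        simp
      haveI := subsingleton_of_zero_eq_one hone.symm
      exact hS (by rw [Subsingleton.elim (Matrix.fromBlocks Cᵀ D Dᵀ (-B)) 1]; exact isUnit_one)
    · intro hS
      obtain ⟨a, b, c, d, h1, h2⟩ := key A B C D hS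
      exact ⟨a, -b, -c, d, by rw [h1, neg_neg], by rw [h2, neg_neg]⟩
  · intro hS
    obtain ⟨a, b, c, d, h1, h2⟩ := key A B C D hS
    rw [h1, h2]
    simp [Matrix.toBlocks_fromBlocks₁₂, Matrix.toBlocks_fromBlocks₂₁]
end
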